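/- Let W be an irreducible complex reflection group with largest degree d_r. Then d_r is a regular number for W if and only if the valuation (minimal total degree of a monomial) of the discriminant polynomial Δ_f equals (N + N*)/d_r, for any (equivalently, some) system of basic invariants f. -/

import Mathlib

open MvPolynomial

/-- A (complex) reflection of `ℂ^r`: a finite order invertible linear map, distinct from
the identity, whose fixed subspace `ker(s - Id)` is a hyperplane. -/
def IsReflection {r : ℕ} (w : (Fin r → ℂ) ≃ₗ[ℂ] (Fin r → ℂ)) : Prop :=
  IsOfFinOrder w ∧ w ≠ 1 ∧
    Module.finrank ℂ (LinearMap.ker ((w : (Fin r → ℂ) →ₗ[ℂ] (Fin r → ℂ)) - LinearMap.id))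
      = r - 1

/-- The fixed subspace `ker(w - Id)` of a linear automorphism of `ℂ^r`. -/
noncomputable def fixedSpace {r : ℕ} (w : (Fin r → ℂ) ≃ₗ[ℂ] (Fin r → ℂ)) :
    Submodule ℂ (Fin r → ℂ) :=
  LinearMap.ker ((w : (Fin r → ℂ) →ₗ[ℂ] (Fin r → ℂ)) - LinearMap.id)

/-- `d` is a regular number for `W` iff some `w ∈ W` has an eigenvector, for a root of
unity `ζ` of order `d`, which lies on no reflecting hyperplane (is fixed by no
reflection of `W`). -/
def IsRegularNumber {r : ℕ} (W : Subgroup ((Fin r → ℂ) ≃ₗ[ℂ] (Fin r → ℂ))) (d : ℕ) :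
    Prop :=
  ∃ ζ : ℂ, IsPrimitiveRoot ζ d ∧ ∃ w, w ∈ W ∧ ∃ v : Fin r → ℂ,
    (∀ s, s ∈ W → IsReflection s → s v ≠ v) ∧ w v = ζ • v

/-! Springer's criterion: if `v` is a `ζ`-eigenvector of some `w ∈ W`, with `ζ` a primitive
`d`-th root of unity, then `f i (v) = ζ ^ deg i * f i (v)`, so `f(v)` lies in the coordinate
subspace `{y | y i = 0 whenever d ∤ deg i}`. Conversely every point of that subspace is `f(v)` for
some `v` (the polynomial ring is integral over the invariants, so maximal ideals lift), and then
`ζ • v` and `v` have the same invariants, hence lie in one `W`-orbit (`W` acts transitively on the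
primes over a given prime of the invariant ring). As `v` lies on no reflecting hyperplane iff
`Δ(f(v)) ≠ 0`, `d` is regular iff `Δ` does not vanish on that subspace, i.e. iff some monomial of
`Δ` only involves variables `X i` with `d ∣ deg i`.

For `d = deg (r-1)` these are the variables of top degree. Since `Δ` is weighted homogeneous of
weight `N + N*`, every monomial of total degree `k` satisfies `N + N* ≤ d * k`, with equality iff
it only involves variables of top degree. -/

namespace Finsupp

variable {σ : Type*} [Fintype σ] {w : σ → ℕ} {d : ℕ}

theorem weight_eq_sum_mul (w : σ → ℕ) (m : σ →₀ ℕ) : weight w m = ∑ i, m i * w i := by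
  rw [weight_apply, sum_fintype _ _ fun i => zero_smul ℕ (w i)]
  rfl

theorem weight_le_mul_sum (hw : ∀ i, w i ≤ d) (m : σ →₀ ℕ) : weight w m ≤ d * ∑ i, m i := by
  rw [weight_eq_sum_mul, Finset.mul_sum]
  exact Finset.sum_le_sum fun i _ => by rw [mul_comm d]; exact Nat.mul_le_mul_left _ (hw i)

theorem weight_eq_mul_sum_iff (hw : ∀ i, w i ≤ d) (m : σ →₀ ℕ) :
    weight w m = d * ∑ i, m i ↔ ∀ i, m i ≠ 0 → w i = d := by
  simp_rw [weight_eq_sum_mul, Finset.mul_sum, mul_comm d]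
  rw [Finset.sum_eq_sum_iff_of_le fun i _ => Nat.mul_le_mul_left _ (hw i)]
  simp only [Finset.mem_univ, true_implies, mul_eq_mul_left_iff]
  exact forall_congr' fun i => by tauto

end Finsupp

namespace MvPolynomial

theorem eval_bind₁ {σ τ R : Type*} [CommSemiring R] (v : σ → R) (g : τ → MvPolynomial σ R)
    (P : MvPolynomial τ R) :
    eval v (bind₁ g P) = eval (fun i => eval v (g i)) P :=
  eval₂Hom_bind₁ _ _ _ _

theorem IsHomogeneous.eval_smul {σ R : Type*} [CommSemiring R] {φ : MvPolynomial σ R} {n : ℕ}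
    (hφ : φ.IsHomogeneous n) (c : R) (v : σ → R) :
    eval (c • v) φ = c ^ n * eval v φ := by
  rw [eval_eq, eval_eq, Finset.mul_sum]
  refine Finset.sum_congr rfl fun d hd => ?_
  simp only [Pi.smul_apply, smul_eq_mul, mul_pow, Finset.prod_mul_distrib,
    Finset.prod_pow_eq_pow_sum]
  rw [← hφ.degree_eq_sum_deg_support hd]
  ring

section WeightedHomogeneous

variable {σ τ R : Type*} [CommSemiring R] {w : σ → ℕ} {f : σ → MvPolynomial τ R}

theorem isHomogeneous_aeval_monomial (hf : ∀ i, (f i).IsHomogeneous (w i)) (d : σ →₀ ℕ)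
    (c : R) : (aeval f (monomial d c)).IsHomogeneous (Finsupp.weight w d) := by
  rw [aeval_monomial, Finsupp.weight_apply, Finsupp.sum, Finsupp.prod,
    ← zero_add (Finset.sum _ _)]
  refine (isHomogeneous_C _ c).mul (IsHomogeneous.prod _ _ _ fun i _ => ?_)
  rw [smul_eq_mul, mul_comm]
  exact (hf i).pow _

theorem homogeneousComponent_aeval (hf : ∀ i, (f i).IsHomogeneous (w i)) (n : ℕ)
    (p : MvPolynomial σ R) :
    homogeneousComponent n (aeval f p) = aeval f (weightedHomogeneousComponent w n p) := by
  induction p using MvPolynomial.induction_on' with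
  | monomial d c =>
    rw [weightedHomogeneousComponent_of_mem (isWeightedHomogeneous_monomial w d c rfl),
      homogeneousComponent_of_mem (isHomogeneous_aeval_monomial hf d c)]
    split_ifs <;> simp
  | add p q hp hq => simp only [map_add, hp, hq]

theorem isWeightedHomogeneous_of_isHomogeneous_aeval (hf : ∀ i, (f i).IsHomogeneous (w i))
    (hinj : Function.Injective (aeval (R := R) f)) {p : MvPolynomial σ R} {n : ℕ}
    (hp : (aeval f p).IsHomogeneous n) : p.IsWeightedHomogeneous w n := by
  intro d hd
  by_contra hdn
  have hcomp : weightedHomogeneousComponent w (Finsupp.weight w d) p = 0 := by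
    apply hinj
    rw [← homogeneousComponent_aeval hf, homogeneousComponent_of_mem hp, if_neg hdn, map_zero]
  apply hd
  classical
  simpa [coeff_weightedHomogeneousComponent] using congrArg (coeff d) hcomp

end WeightedHomogeneous

theorem IsWeightedHomogeneous.mul_sInf_sum_eq_iff {σ R : Type*} [Fintype σ] [CommSemiring R]
    {p : MvPolynomial σ R} {w : σ → ℕ} {n d : ℕ} (hp : p.IsWeightedHomogeneous w n)
    (hp0 : p ≠ 0) (hw : ∀ i, w i ≤ d) :
    d * sInf {k | ∃ m ∈ p.support, ∑ i, m i = k} = n ↔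
      ∃ m ∈ p.support, ∀ i, m i ≠ 0 → w i = d := by
  have hweight : ∀ m ∈ p.support, Finsupp.weight w m = n := fun m hm => hp (mem_support_iff.mp hm)
  obtain ⟨m₀, hm₀, hsum⟩ : sInf {k | ∃ m ∈ p.support, ∑ i, m i = k} ∈ _ :=
    Nat.sInf_mem (by
      obtain ⟨m, hm⟩ := Finset.nonempty_iff_ne_empty.mpr (mt support_eq_empty.mp hp0)
      exact ⟨_, m, hm, rfl⟩)
  rw [← hsum]
  constructor
  · intro h
    exact ⟨m₀, hm₀, (Finsupp.weight_eq_mul_sum_iff hw m₀).mp (by rw [hweight m₀ hm₀, h])⟩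
  · rintro ⟨m, hm, hmd⟩
    refine le_antisymm ?_ (hweight m₀ hm₀ ▸ Finsupp.weight_le_mul_sum hw m₀)
    rw [← hweight m hm, (Finsupp.weight_eq_mul_sum_iff hw m).mpr hmd, hsum]
    exact Nat.mul_le_mul_left _ (Nat.sInf_le ⟨m, hm, rfl⟩)

theorem coeff_bind₁_ite_X {σ R : Type*} [CommSemiring R] (s : σ → Prop) [DecidablePred s]
    {m : σ →₀ ℕ} (hm : ∀ i, m i ≠ 0 → s i) (p : MvPolynomial σ R) :
    coeff m (bind₁ (fun i => if s i then X i else 0) p) = coeff m p := by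
  classical
  induction p using MvPolynomial.induction_on' with
  | monomial d c =>
    rw [bind₁_monomial]
    by_cases hd : ∀ i, d i ≠ 0 → s i
    · rw [monomial_eq]
      congr 2
      refine Finset.prod_congr rfl fun i hi => ?_
      rw [if_pos (hd i (Finsupp.mem_support_iff.mp hi))]
    · push Not at hd
      obtain ⟨i, hi, hsi⟩ := hd
      rw [Finset.prod_eq_zero (Finsupp.mem_support_iff.mpr hi) (by rw [if_neg hsi, zero_pow hi]),
        mul_zero, coeff_zero, coeff_monomial, if_neg]
      rintro rfl
      exact hsi (hm i hi)
  | add p q hp hq => simp only [map_add, coeff_add, hp, hq]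

theorem exists_eval_ne_zero_iff_exists_mem_support {σ K : Type*} [Field K] [Infinite K]
    (s : σ → Prop) (p : MvPolynomial σ K) :
    (∃ y : σ → K, (∀ i, ¬ s i → y i = 0) ∧ eval y p ≠ 0) ↔
      ∃ m ∈ p.support, ∀ i, m i ≠ 0 → s i := by
  classical
  constructor
  · rintro ⟨y, hy, hp⟩
    rw [eval_eq] at hp
    obtain ⟨m, hm, hterm⟩ := Finset.exists_ne_zero_of_sum_ne_zero hp
    refine ⟨m, hm, fun i hi => by_contra fun hsi => hterm ?_⟩
    rw [Finset.prod_eq_zero (Finsupp.mem_support_iff.mpr hi) (by rw [hy i hsi, zero_pow hi]),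
      mul_zero]
  · rintro ⟨m, hm, hms⟩
    obtain ⟨x, hx⟩ : ∃ x, eval x (bind₁ (fun i => if s i then X i else 0) p) ≠ 0 := by
      by_contra! h
      apply mem_support_iff.mp hm
      have h0 : bind₁ (fun i => if s i then X i else 0) p = 0 :=
        MvPolynomial.funext fun x => by rw [h x, map_zero]
      rw [← coeff_bind₁_ite_X s hms, h0, coeff_zero]
    refine ⟨fun i => if s i then x i else 0, fun i hi => if_neg hi, ?_⟩
    rw [eval_bind₁] at hx
    convert hx using 3
    ext i
    split_ifs <;> simp

end MvPolynomial

theorem AlgebraicIndependent.ne_zero_of_isHomogeneous {ι σ K : Type*} [Field K]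
    {f : ι → MvPolynomial σ K} (hf : AlgebraicIndependent K f) {i : ι} {n : ℕ}
    (hfi : (f i).IsHomogeneous n) : n ≠ 0 := by
  rintro rfl
  have := hf.transcendental i
  rw [totalDegree_eq_zero_iff_eq_C.mp (Nat.le_zero.mp hfi.totalDegree_le)] at this
  exact this (isAlgebraic_algebraMap _)

theorem AlgebraicIndependent.exists_eval_eq {ι σ K : Type*} [Field K] [IsAlgClosed K] [Finite σ]
    {f : ι → MvPolynomial σ K} (hf : AlgebraicIndependent K f)
    [Algebra.IsIntegral (Algebra.adjoin K (Set.range f)) (MvPolynomial σ K)] (y : ι → K) :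
    ∃ v, ∀ i, eval v (f i) = y i := by
  set ψ := (aeval y).comp (hf.aevalEquiv.symm : Algebra.adjoin K (Set.range f) →ₐ[K] _)
  have hψ : Function.Surjective ψ := fun c => ⟨algebraMap K _ c, ψ.commutes c⟩
  have := RingHom.ker_isMaximal_of_surjective ψ hψ
  obtain ⟨Q, hQ, hQψ⟩ := Ideal.exists_ideal_over_maximal_of_isIntegral (RingHom.ker ψ)
    (S := MvPolynomial σ K)
    (by rw [(RingHom.injective_iff_ker_eq_bot _).mp Subtype.val_injective]; exact bot_le)
  obtain ⟨v, rfl⟩ := (isMaximal_iff_eq_vanishingIdeal_singleton (K := K)).mp hQ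
  refine ⟨v, fun i => ?_⟩
  have hker : hf.aevalEquiv (X i - C (y i)) ∈ RingHom.ker ψ := by simp [ψ]
  rw [← hQψ, Ideal.mem_comap, hf.algebraMap_aevalEquiv, mem_vanishingIdeal_singleton_iff] at hker
  simpa [sub_eq_zero] using hker

namespace MvPolynomial

section LinearAction

variable {σ K : Type*} [Fintype σ] [DecidableEq σ] [Field K]

noncomputable def linearComp (w : (σ → K) →ₗ[K] (σ → K)) :
    MvPolynomial σ K →ₐ[K] MvPolynomial σ K :=
  bind₁ (LinearMap.toMatrix' w).toMvPolynomial

@[simp]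
theorem eval_linearComp (w : (σ → K) →ₗ[K] (σ → K)) (P : MvPolynomial σ K) (v : σ → K) :
    eval v (linearComp w P) = eval (w v) P := by
  simp [linearComp, eval_bind₁, Matrix.toMvPolynomial_eval_eq_apply]

variable [Infinite K]

noncomputable instance : MulSemiringAction ((σ → K) ≃ₗ[K] (σ → K)) (MvPolynomial σ K) where
  smul w := linearComp (w.symm : (σ → K) →ₗ[K] (σ → K))
  one_smul P := MvPolynomial.funext fun v => eval_linearComp _ P v
  mul_smul w w' P := MvPolynomial.funext fun v => by
    change eval v (linearComp _ P) = eval v (linearComp _ (linearComp _ P))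
    simp only [eval_linearComp, LinearEquiv.coe_coe]
    rfl
  smul_zero w := map_zero _
  smul_add w := map_add _
  smul_one w := map_one _
  smul_mul w := map_mul _

theorem eval_linearEquiv_smul (w : (σ → K) ≃ₗ[K] (σ → K)) (P : MvPolynomial σ K) (v : σ → K) :
    eval v (w • P) = eval (w.symm v) P :=
  eval_linearComp _ _ _

theorem linearEquiv_smul_eq_self_iff (w : (σ → K) ≃ₗ[K] (σ → K)) (P : MvPolynomial σ K) :
    w • P = P ↔ ∀ v, eval (w v) P = eval v P := by
  constructor
  · intro h v
    conv_lhs => rw [← h]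
    rw [eval_linearEquiv_smul, LinearEquiv.symm_apply_apply]
  · intro h
    refine MvPolynomial.funext fun v => ?_
    rw [eval_linearEquiv_smul, ← h, LinearEquiv.apply_symm_apply]

variable {W : Subgroup ((σ → K) ≃ₗ[K] (σ → K))} {A : Subalgebra K (MvPolynomial σ K)}

theorem isInvariant_of_forall_eval_eq
    (hA : ∀ P, (∀ w ∈ W, ∀ v, eval (w v) P = eval v P) → P ∈ A) :
    Algebra.IsInvariant A (MvPolynomial σ K) W :=
  ⟨fun P hP => ⟨⟨P, hA P fun w hw => (linearEquiv_smul_eq_self_iff w P).mp (hP ⟨w, hw⟩)⟩, rfl⟩⟩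

theorem smulCommClass_of_forall_eval_eq
    (hA : ∀ P ∈ A, ∀ w ∈ W, ∀ v, eval (w v) P = eval v P) :
    SMulCommClass W A (MvPolynomial σ K) where
  smul_comm w a P := by
    have ha : (w : (σ → K) ≃ₗ[K] (σ → K)) • (a : MvPolynomial σ K) = a :=
      (linearEquiv_smul_eq_self_iff _ _).mpr (hA a a.2 w w.2)
    rw [Subgroup.smul_def, Subgroup.smul_def, Subalgebra.smul_def, Subalgebra.smul_def,
      smul_eq_mul, smul_eq_mul, smul_mul', ha]

end LinearAction

section Orbits

variable {σ K ι : Type*} [Fintype σ] [Field K] [Infinite K]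
  {W : Subgroup ((σ → K) ≃ₗ[K] (σ → K))} [Finite W] {f : ι → MvPolynomial σ K}

theorem exists_apply_eq_of_forall_eval_eq
    (hf : ∀ P, (∀ w ∈ W, ∀ v, eval (w v) P = eval v P) ↔ P ∈ Algebra.adjoin K (Set.range f))
    {v₁ v₂ : σ → K} (h : ∀ i, eval v₁ (f i) = eval v₂ (f i)) : ∃ w ∈ W, w v₁ = v₂ := by
  classical
  set A := Algebra.adjoin K (Set.range f)
  have := isInvariant_of_forall_eval_eq fun P => (hf P).mp
  have := smulCommClass_of_forall_eval_eq fun P hP => (hf P).mpr hP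
  have hA : ∀ P ∈ A, eval v₁ P = eval v₂ P := fun P hP =>
    (AlgHom.eqOn_adjoin_iff (φ := aeval v₁) (ψ := aeval v₂)).mpr
      (by rintro _ ⟨i, rfl⟩; exact h i) hP
  have hunder : (RingHom.ker (eval v₁)).under A = (RingHom.ker (eval v₂)).under A := by
    ext a
    simp only [Ideal.under_def, Ideal.mem_comap, RingHom.mem_ker]
    rw [show algebraMap A (MvPolynomial σ K) a = a from rfl, hA _ a.2]
  have := RingHom.ker_isPrime (eval v₁)
  have := RingHom.ker_isPrime (eval v₂)
  obtain ⟨w, hw⟩ := Algebra.IsInvariant.exists_smul_of_under_eq A (MvPolynomial σ K) W _ _ hunder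
  refine ⟨w, w.2, ?_⟩
  ext i
  have hmem : X i - C (v₂ i) ∈ RingHom.ker (eval v₂) := by simp
  rw [hw, Ideal.mem_pointwise_smul_iff_inv_smul_mem, RingHom.mem_ker, Subgroup.smul_def,
    eval_linearEquiv_smul] at hmem
  simp only [map_sub, eval_X, eval_C, sub_eq_zero] at hmem
  exact hmem

theorem exists_apply_eq_smul_iff {deg : ι → ℕ} (hf_hom : ∀ i, (f i).IsHomogeneous (deg i))
    (hf : ∀ P, (∀ w ∈ W, ∀ v, eval (w v) P = eval v P) ↔ P ∈ Algebra.adjoin K (Set.range f))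
    {ζ : K} {d : ℕ} (hζ : IsPrimitiveRoot ζ d) (v : σ → K) :
    (∃ w ∈ W, w v = ζ • v) ↔ ∀ i, ¬ d ∣ deg i → eval v (f i) = 0 := by
  constructor
  · rintro ⟨w, hw, hwv⟩ i hi
    have hinv : eval (w v) (f i) = eval v (f i) :=
      (hf (f i)).mpr (Algebra.subset_adjoin ⟨i, rfl⟩) w hw v
    rw [hwv, (hf_hom i).eval_smul] at hinv
    by_contra h
    exact hi ((hζ.pow_eq_one_iff_dvd _).mp (mul_right_cancel₀ h (hinv.trans (one_mul _).symm)))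
  · intro h
    refine exists_apply_eq_of_forall_eval_eq hf fun i => ?_
    rw [(hf_hom i).eval_smul]
    by_cases hi : d ∣ deg i
    · rw [(hζ.pow_eq_one_iff_dvd _).mpr hi, one_mul]
    · rw [h i hi, mul_zero]

end Orbits

end MvPolynomial

section Reflections

variable {r : ℕ}

theorem mem_fixedSpace {w : (Fin r → ℂ) ≃ₗ[ℂ] (Fin r → ℂ)} {v : Fin r → ℂ} :
    v ∈ fixedSpace w ↔ w v = v := by
  simp [fixedSpace, sub_eq_zero]

theorem fixedSpace_eq_top {w : (Fin r → ℂ) ≃ₗ[ℂ] (Fin r → ℂ)} : fixedSpace w = ⊤ ↔ w = 1 := by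
  simp only [Submodule.eq_top_iff', mem_fixedSpace, LinearEquiv.ext_iff]
  rfl

theorem isReflection_and_fixedSpace_eq_of_le {w : (Fin r → ℂ) ≃ₗ[ℂ] (Fin r → ℂ)}
    {H : Submodule ℂ (Fin r → ℂ)} (hw : IsOfFinOrder w) (hw1 : w ≠ 1)
    (hH : Module.finrank ℂ H = r - 1) (hle : H ≤ fixedSpace w) :
    IsReflection w ∧ fixedSpace w = H := by
  have hlt : Module.finrank ℂ (fixedSpace w) < r := by
    simpa using Submodule.finrank_lt (mt fixedSpace_eq_top.mp hw1)
  have hrank : Module.finrank ℂ (fixedSpace w) = r - 1 := by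
    have := Submodule.finrank_mono hle
    omega
  exact ⟨⟨hw, hw1, hrank⟩, (Submodule.eq_of_le_of_finrank_eq hle (hH.trans hrank.symm)).symm⟩

variable {W : Subgroup ((Fin r → ℂ) ≃ₗ[ℂ] (Fin r → ℂ))} [Finite W]

theorem pointwise_stabilizer_eq_insert {H : Submodule ℂ (Fin r → ℂ)}
    (hH : Module.finrank ℂ H = r - 1) :
    {w | w ∈ W ∧ ∀ v ∈ H, w v = v} = insert 1 {s | s ∈ W ∧ IsReflection s ∧ fixedSpace s = H} := by
  ext w
  simp only [Set.mem_ofPred_eq, Set.mem_insert_iff]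
  constructor
  · rintro ⟨hw, hfix⟩
    by_cases hw1 : w = 1
    · exact .inl hw1
    · have hord : IsOfFinOrder w := W.subtype.isOfFinOrder (isOfFinOrder_of_finite (⟨w, hw⟩ : W))
      exact .inr ⟨hw, isReflection_and_fixedSpace_eq_of_le hord hw1 hH
        fun v hv => mem_fixedSpace.mpr (hfix v hv)⟩
  · rintro (rfl | ⟨hw, -, rfl⟩)
    · exact ⟨one_mem W, fun v _ => rfl⟩
    · exact ⟨hw, fun v hv => mem_fixedSpace.mp hv⟩

theorem ncard_pointwise_stabilizer {H : Submodule ℂ (Fin r → ℂ)}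
    (hH : Module.finrank ℂ H = r - 1) :
    {w | w ∈ W ∧ ∀ v ∈ H, w v = v}.ncard
      = {s | s ∈ W ∧ IsReflection s ∧ fixedSpace s = H}.ncard + 1 := by
  rw [pointwise_stabilizer_eq_insert hH, Set.ncard_insert_of_notMem (fun h => h.2.1.2.1 rfl)
    ((Set.toFinite W).subset fun s hs => hs.1)]

theorem sum_ncard_pointwise_stabilizer (A : Finset (Submodule ℂ (Fin r → ℂ)))
    (hA : ∀ H, H ∈ A ↔ ∃ w, w ∈ W ∧ IsReflection w ∧ fixedSpace w = H) :
    ∑ H ∈ A, {w | w ∈ W ∧ ∀ v ∈ H, w v = v}.ncard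
      = {w | w ∈ W ∧ IsReflection w}.ncard + A.card := by
  classical
  have hfin : {w | w ∈ W ∧ IsReflection w}.Finite := (Set.toFinite W).subset fun s hs => hs.1
  have hfiber : ∀ H, {s | s ∈ W ∧ IsReflection s ∧ fixedSpace s = H}
      = ↑(hfin.toFinset.filter (fixedSpace · = H)) := fun H => by ext s; simp [and_assoc]
  have hterm : ∀ H ∈ A, {w | w ∈ W ∧ ∀ v ∈ H, w v = v}.ncard
      = (hfin.toFinset.filter (fixedSpace · = H)).card + 1 := by
    intro H hH
    obtain ⟨s, -, hs, rfl⟩ := (hA H).mp hH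
    rw [ncard_pointwise_stabilizer (H := fixedSpace s) hs.2.2, hfiber, Set.ncard_coe_finset]
  have hcover : ∀ s ∈ hfin.toFinset, fixedSpace s ∈ A := fun s hs => by
    rw [Set.Finite.mem_toFinset] at hs
    exact (hA _).mpr ⟨s, hs.1, hs.2, rfl⟩
  rw [Finset.sum_congr rfl hterm, Finset.sum_add_distrib,
    ← Finset.card_eq_sum_card_fiberwise hcover, Set.ncard_eq_toFinset_card _ hfin,
    Finset.card_eq_sum_ones A]

end Reflections

section Springer

variable {r : ℕ} {W : Subgroup ((Fin r → ℂ) ≃ₗ[ℂ] (Fin r → ℂ))}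
  {A : Finset (Submodule ℂ (Fin r → ℂ))} {l : Submodule ℂ (Fin r → ℂ) → MvPolynomial (Fin r) ℂ}
  {e : Submodule ℂ (Fin r → ℂ) → ℕ} {f : Fin r → MvPolynomial (Fin r) ℂ}
  {Δ : MvPolynomial (Fin r) ℂ}

theorem eval_ne_zero_iff_forall_isReflection_apply_ne
    (hA : ∀ H, H ∈ A ↔ ∃ w, w ∈ W ∧ IsReflection w ∧ fixedSpace w = H)
    (hl : ∀ H ∈ A, ∀ v : Fin r → ℂ, eval v (l H) = 0 ↔ v ∈ H) (he : ∀ H ∈ A, e H ≠ 0)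
    (hΔ : aeval f Δ = ∏ H ∈ A, l H ^ e H) (v : Fin r → ℂ) :
    eval (fun i => eval v (f i)) Δ ≠ 0 ↔ ∀ s ∈ W, IsReflection s → s v ≠ v := by
  rw [← eval_bind₁, ← aeval_eq_bind₁, hΔ, map_prod, Finset.prod_ne_zero_iff]
  simp only [map_pow]
  constructor
  · intro h s hs hrefl hsv
    have hH := (hA _).mpr ⟨s, hs, hrefl, rfl⟩
    exact pow_ne_zero_iff (he _ hH) |>.mp (h _ hH) ((hl _ hH v).mpr (mem_fixedSpace.mpr hsv))
  · intro h H hH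
    obtain ⟨s, hs, hrefl, rfl⟩ := (hA H).mp hH
    exact pow_ne_zero _ fun h0 => h s hs hrefl (mem_fixedSpace.mp ((hl _ hH v).mp h0))

theorem isRegularNumber_iff_exists_eval_ne_zero [Finite W] {deg : Fin r → ℕ}
    (hf_hom : ∀ i, (f i).IsHomogeneous (deg i)) (hf_alg : AlgebraicIndependent ℂ f)
    (hf_gen : ∀ P : MvPolynomial (Fin r) ℂ,
      (∀ w ∈ W, ∀ v : Fin r → ℂ, eval (w v) P = eval v P) ↔
        P ∈ Algebra.adjoin ℂ (Set.range f))
    (hA : ∀ H, H ∈ A ↔ ∃ w, w ∈ W ∧ IsReflection w ∧ fixedSpace w = H)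
    (hl : ∀ H ∈ A, ∀ v : Fin r → ℂ, eval v (l H) = 0 ↔ v ∈ H) (he : ∀ H ∈ A, e H ≠ 0)
    (hΔ : aeval f Δ = ∏ H ∈ A, l H ^ e H) {d : ℕ} (hd : d ≠ 0) :
    IsRegularNumber W d ↔ ∃ y : Fin r → ℂ, (∀ i, ¬ d ∣ deg i → y i = 0) ∧ eval y Δ ≠ 0 := by
  have hreg := eval_ne_zero_iff_forall_isReflection_apply_ne hA hl he hΔ
  constructor
  · rintro ⟨ζ, hζ, w, hw, v, hv, hwv⟩
    exact ⟨_, (exists_apply_eq_smul_iff hf_hom hf_gen hζ v).mp ⟨w, hw, hwv⟩, (hreg v).mpr hv⟩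
  · rintro ⟨y, hy, hΔy⟩
    have := isInvariant_of_forall_eval_eq fun P => (hf_gen P).mp
    have := Algebra.IsInvariant.isIntegral (Algebra.adjoin ℂ (Set.range f))
      (MvPolynomial (Fin r) ℂ) W
    obtain ⟨v, hv⟩ := hf_alg.exists_eval_eq y
    obtain rfl : (fun i => eval v (f i)) = y := funext hv
    have hζ := Complex.isPrimitiveRoot_exp d hd
    obtain ⟨w, hw, hwv⟩ := (exists_apply_eq_smul_iff hf_hom hf_gen hζ v).mpr hy
    exact ⟨_, hζ, w, hw, v, (hreg v).mp hΔy, hwv⟩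

end Springer

/-- Let `W` be an irreducible complex reflection group with degrees
`deg 0 ≤ … ≤ deg (r-1)`. The largest degree `deg (r-1)` is a regular number for `W` if
and only if the valuation of the discriminant polynomial `Δ_f` (the minimal total degree
of a monomial appearing in `Δ_f`, independent of the choice of `f`) equals
`(N + N*) / deg (r-1)` — packaged as `deg (r-1) * valuation = N + N*`. -/
theorem largest_degree_regular_iff_valuation
    (r : ℕ) (hr : 0 < r) (W : Subgroup ((Fin r → ℂ) ≃ₗ[ℂ] (Fin r → ℂ)))
    (hWfin : (W : Set ((Fin r → ℂ) ≃ₗ[ℂ] (Fin r → ℂ))).Finite)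
    (deg : Fin r → ℕ) (hmono : Monotone deg)
    (f : Fin r → MvPolynomial (Fin r) ℂ)
    (hf_hom : ∀ i, (f i).IsHomogeneous (deg i))
    (hf_alg : AlgebraicIndependent ℂ f)
    (hf_gen : ∀ P : MvPolynomial (Fin r) ℂ,
      (∀ w ∈ W, ∀ v : Fin r → ℂ, eval (w v) P = eval v P) ↔
        P ∈ Algebra.adjoin ℂ (Set.range f))
    (A : Finset (Submodule ℂ (Fin r → ℂ)))
    (hA : ∀ H, H ∈ A ↔ ∃ w, w ∈ W ∧ IsReflection w ∧ fixedSpace w = H)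
    (l : Submodule ℂ (Fin r → ℂ) → MvPolynomial (Fin r) ℂ)
    (hl : ∀ H ∈ A, (l H).IsHomogeneous 1 ∧ ∀ v : Fin r → ℂ, (eval v (l H) = 0 ↔ v ∈ H))
    (e : Submodule ℂ (Fin r → ℂ) → ℕ)
    (he : ∀ H ∈ A, e H = Set.ncard {w | w ∈ W ∧ ∀ v ∈ H, w v = v})
    (N Nstar : ℕ)
    (hN : N = Set.ncard {w | w ∈ W ∧ IsReflection w})
    (hNstar : Nstar = A.card)
    (Δ : MvPolynomial (Fin r) ℂ)
    (hΔ : aeval f Δ = ∏ H ∈ A, l H ^ e H)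
    (hΔne : Δ ≠ 0) :
    IsRegularNumber W (deg ⟨r - 1, by omega⟩) ↔
      deg ⟨r - 1, by omega⟩ *
        sInf {k : ℕ | ∃ m ∈ Δ.support, ∑ i, m i = k} = N + Nstar := by
  have : Finite W := hWfin
  set d := deg ⟨r - 1, by omega⟩
  have hdeg_ne : ∀ i, deg i ≠ 0 := fun i => hf_alg.ne_zero_of_isHomogeneous (hf_hom i)
  have hdeg_le : ∀ i, deg i ≤ d := fun i => hmono (Fin.mk_le_mk.mpr (by omega))
  have hdvd : ∀ i, d ∣ deg i ↔ deg i = d := fun i =>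
    ⟨fun h => le_antisymm (hdeg_le i) (Nat.le_of_dvd (Nat.pos_of_ne_zero (hdeg_ne i)) h),
     fun h => h ▸ dvd_rfl⟩
  have he_ne : ∀ H ∈ A, e H ≠ 0 := fun H hH => by
    obtain ⟨s, -, hs, rfl⟩ := (hA H).mp hH
    rw [he _ hH, ncard_pointwise_stabilizer (H := fixedSpace s) hs.2.2]
    exact Nat.succ_ne_zero _
  have hΔ_hom : Δ.IsWeightedHomogeneous deg (N + Nstar) := by
    refine isWeightedHomogeneous_of_isHomogeneous_aeval hf_hom hf_alg ?_
    rw [hΔ, hN, hNstar, ← sum_ncard_pointwise_stabilizer A hA, ← Finset.sum_congr rfl he]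
    exact IsHomogeneous.prod _ _ _ fun H hH => by simpa using (hl H hH).1.pow (e H)
  rw [isRegularNumber_iff_exists_eval_ne_zero hf_hom hf_alg hf_gen hA (fun H hH => (hl H hH).2)
      he_ne hΔ (hdeg_ne _),
    hΔ_hom.mul_sInf_sum_eq_iff hΔne hdeg_le, ← exists_eval_ne_zero_iff_exists_mem_support]
  exact exists_congr fun y =>
    and_congr_left' (forall_congr' fun i => imp_congr_left (not_congr (hdvd i)))
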